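/- If k is even and k + 1 ≤ i ≤ n, then the shortest odd cycle in Q_{n,k} containing a given i-dimensional hypercube edge has length exactly k + 3. -/

import Mathlib

open SimpleGraph

/-- The `n`-dimensional hypercube: vertices are binary strings of length `n`
(indexed so that bit `i+1` of the paper is index `i`), adjacent iff they
differ in exactly one bit. -/
def hypercube (n : ℕ) : SimpleGraph (Fin n → Bool) where
  Adj u v := ∃! i, u i ≠ v i
  symm := ⟨by
    rintro u v ⟨i, hi, hu⟩
    exact ⟨i, hi.symm, fun j hj => hu j hj.symm⟩⟩
  loopless := ⟨by
    rintro u ⟨i, hi, -⟩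
    exact hi rfl⟩

/-- Skip relation: `u` and `v` differ exactly in the last `k` bits
(indices `0, …, k-1`). -/
def skipRel (n k : ℕ) (u v : Fin n → Bool) : Prop :=
  u ≠ v ∧ ∀ i : Fin n, (i.val < k → u i ≠ v i) ∧ (k ≤ i.val → u i = v i)

/-- The enhanced hypercube `Q_{n,k}`: hypercube edges together with skip edges. -/
def enhanced (n k : ℕ) : SimpleGraph (Fin n → Bool) where
  Adj u v := (hypercube n).Adj u v ∨ skipRel n k u v
  symm := ⟨by
    rintro u v (h | ⟨hne, h⟩)
    · exact Or.inl (SimpleGraph.Adj.symm h)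
    · exact Or.inr ⟨hne.symm, fun i =>
        ⟨fun hi => ((h i).1 hi).symm, fun hi => ((h i).2 hi).symm⟩⟩⟩
  loopless := ⟨by
    rintro u (h | ⟨hne, -⟩)
    · exact (hypercube n).irrefl h
    · exact hne rfl⟩

/-- The folded hypercube `FQ_n`: hypercube edges together with complementary edges. -/
def folded (n : ℕ) : SimpleGraph (Fin n → Bool) where
  Adj u v := (hypercube n).Adj u v ∨ (u ≠ v ∧ ∀ i, u i ≠ v i)
  symm := ⟨by
    rintro u v (h | ⟨hne, h⟩)
    · exact Or.inl (SimpleGraph.Adj.symm h)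
    · exact Or.inr ⟨hne.symm, fun i => (h i).symm⟩⟩
  loopless := ⟨by
    rintro u (h | ⟨hne, -⟩)
    · exact (hypercube n).irrefl h
    · exact hne rfl⟩

/-- The Cartesian product `K₂ × G`: two copies of `G` joined by crossing edges. -/
def K2Prod {V : Type*} (G : SimpleGraph V) : SimpleGraph (Bool × V) :=
  (completeGraph Bool) □ G

/-- The edge `e` lies on a cycle of length `l` in `G`. -/
def EdgeOnCycle {V : Type*} (G : SimpleGraph V) (e : Sym2 V) (l : ℕ) : Prop :=
  ∃ (v : V) (c : G.Walk v v), c.IsCycle ∧ c.length = l ∧ e ∈ c.edges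

/-!
Along a closed walk in `Q_{n,k}` every coordinate is flipped an even number of times. Coordinate
`j < k` is flipped by each of the `S` skip darts and by the `H j` hypercube darts of dimension
`j`; coordinate `j ≥ k` only by the latter. Summing over `j`, `k * S + ∑ H j` is even, so for
`k` even and an odd closed walk `S` is odd. Hence `H j` is odd for every `j < k`, and `H i`,
being even and positive, is at least `2`: the walk has length at least `1 + k + 2`. Equality is
attained by `u → v`, the skip edge at `v`, the `i`-edge back to the side of `u`, and `k` hypercube
edges restoring the low bits one at a time.
-/

open Finset

theorem SimpleGraph.Walk.even_countP_darts_ne_iff {V : Type*} {G : SimpleGraph V} (f : V → Bool)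
    {x y : V} (p : G.Walk x y) :
    Even (p.darts.countP fun d => f d.fst ≠ f d.snd) ↔ f x = f y := by
  induction p with
  | nil => simp
  | @cons a b c _ p ih =>
    rw [Walk.darts_cons, List.countP_cons, Nat.even_add, ih]
    cases f a <;> cases f b <;> cases f c <;> simp

theorem List.sum_countP_eq_length {ι α : Type*} [Fintype ι] (p : ι → α → Prop)
    [∀ i, DecidablePred (p i)] (l : List α) (h : ∀ a ∈ l, ∃! i, p i a) :
    ∑ i, l.countP (p i ·) = l.length := by
  induction l with
  | nil => simp
  | cons a l ih =>
    simp only [List.countP_cons, sum_add_distrib, List.length_cons, decide_eq_true_eq]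
    rw [ih fun b hb => h b (List.mem_cons_of_mem a hb), sum_boole, Nat.cast_id,
      ← Fintype.existsUnique_iff_card_one _ |>.mp (h a List.mem_cons_self)]

theorem add_three_le_sum_add_of_even {n k : ℕ} (hk : Even k) {i : Fin n} (hi : k ≤ i)
    (S : ℕ) (H : Fin n → ℕ) (hpar : ∀ j : Fin n, Even (H j + if j < k then S else 0))
    (hodd : Odd (∑ j, H j + S)) (hHi : 0 < H i) : k + 3 ≤ ∑ j, H j + S := by
  set low : Finset (Fin n) := univ.filter fun j => (j : ℕ) < k
  have hlow_card : #low = k := by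
    rw [Fin.card_filter_val_lt, min_eq_right (hi.trans i.isLt.le)]
  have hsum : ∑ j, (H j + if j < k then S else 0) = ∑ j, H j + k * S := by
    rw [sum_add_distrib, sum_ite, sum_const_zero, sum_const, smul_eq_mul, add_zero, hlow_card]
  have hH : Even (∑ j, H j) := by
    have : Even (∑ j, (H j + if j < k then S else 0)) := even_sum _ fun j _ => hpar j
    rw [hsum] at this
    exact (Nat.even_add.mp this).mpr (hk.mul_right S)
  rw [Nat.even_iff] at hH
  rw [Nat.odd_iff] at hodd
  have hlow : ∀ j ∈ low, 1 ≤ H j := by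
    intro j hj
    have := hpar j
    rw [if_pos (mem_filter.mp hj).2, Nat.even_iff] at this
    omega
  have hHi2 : 2 ≤ H i := by
    have := hpar i
    rw [if_neg hi.not_gt, add_zero, Nat.even_iff] at this
    omega
  have : k + 2 ≤ ∑ j, H j := calc
    k + 2 = ∑ j ∈ low, 1 + 2 := by rw [sum_const, smul_eq_mul, mul_one, hlow_card]
    _ ≤ ∑ j ∈ low, H j + H i := by gcongr with j hj; exact hlow j hj
    _ = ∑ j ∈ insert i low, H j := by rw [sum_insert (by simpa [low] using hi), add_comm]
    _ ≤ ∑ j, H j := sum_le_univ_sum_of_nonneg fun _ => Nat.zero_le _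
  omega

section Enhanced

variable {n k : ℕ}

theorem hypercube_le_enhanced : hypercube n ≤ enhanced n k :=
  fun _ _ => Or.inl

theorem hypercube_adj_of_forall_ne_iff {u v : Fin n → Bool} {i : Fin n}
    (huv : ∀ j, u j ≠ v j ↔ j = i) : (hypercube n).Adj u v :=
  ⟨i, (huv i).2 rfl, fun j hj => (huv j).1 hj⟩

theorem skipRel.ne_iff {x y : Fin n → Bool} (h : skipRel n k x y) (j : Fin n) :
    x j ≠ y j ↔ j < k :=
  ⟨fun hne => not_le.mp fun hj => hne ((h.2 j).2 hj), (h.2 j).1⟩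

theorem enhanced_add_three_le_length_of_odd (hk : Even k) {i : Fin n} (hi : k ≤ i)
    {u v : Fin n → Bool} (huv : ∀ j, u j ≠ v j ↔ j = i) {x : Fin n → Bool}
    (c : (enhanced n k).Walk x x) (hodd : Odd c.length) (hmem : s(u, v) ∈ c.edges) :
    k + 3 ≤ c.length := by
  classical
  set hypDarts := c.darts.filter fun d => (hypercube n).Adj d.fst d.snd
  set skipDarts := c.darts.filter fun d => !(hypercube n).Adj d.fst d.snd
  have hlen : c.length =
      ∑ j, hypDarts.countP (fun d => d.fst j ≠ d.snd j) + skipDarts.length := by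
    rw [List.sum_countP_eq_length (fun j (d : (enhanced n k).Dart) => d.fst j ≠ d.snd j)
      hypDarts fun d hd => of_decide_eq_true (List.mem_filter.mp hd).2,
      ← c.length_darts, List.length_eq_length_filter_add]
  rw [hlen] at hodd ⊢
  refine add_three_le_sum_add_of_even hk hi _ _ (fun j => ?_) hodd ?_
  · have hskip : ∀ d ∈ skipDarts, d.fst j ≠ d.snd j ↔ j < k := fun d hd =>
      (d.adj.resolve_left (by simpa using (List.mem_filter.mp hd).2) : skipRel n k _ _).ne_iff j
    have hcount : skipDarts.countP (fun d => d.fst j ≠ d.snd j) =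
        if j < k then skipDarts.length else 0 := by
      split_ifs with hj
      · exact List.countP_eq_length.mpr fun d hd => decide_eq_true ((hskip d hd).mpr hj)
      · exact List.countP_eq_zero.mpr fun d hd => by simpa [hskip d hd] using hj
    rw [← hcount, ← List.countP_eq_countP_filter_add, c.even_countP_darts_ne_iff (· j)]
  · have huv' := hypercube_adj_of_forall_ne_iff huv
    obtain ⟨d, hd, hde⟩ := List.mem_map.mp hmem
    refine List.countP_pos_iff.mpr ⟨d, List.mem_filter.mpr ⟨hd, ?_⟩, ?_⟩
    all_goals rcases dart_edge_eq_mk'_iff.mp hde with h | h <;>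
      simp [h, huv', huv'.symm, huv, ((huv i).2 rfl).symm]

def flipBelow (x : Fin n → Bool) (m : ℕ) : Fin n → Bool :=
  fun j => if (j : ℕ) < m then !x j else x j

@[simp]
theorem flipBelow_zero (x : Fin n → Bool) : flipBelow x 0 = x := by
  ext j; simp [flipBelow]

theorem flipBelow_apply_of_le {m : ℕ} (x : Fin n → Bool) {j : Fin n} (hj : m ≤ j) :
    flipBelow x m j = x j :=
  if_neg hj.not_gt

@[simp]
theorem flipBelow_ne_flipBelow_iff {m : ℕ} {x y : Fin n → Bool} {j : Fin n} :
    flipBelow x m j ≠ flipBelow y m j ↔ x j ≠ y j := by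
  unfold flipBelow; split_ifs <;> simp

@[simp]
theorem hypercube_adj_flipBelow_iff {m : ℕ} {x y : Fin n → Bool} :
    (hypercube n).Adj (flipBelow x m) (flipBelow y m) ↔ (hypercube n).Adj x y := by
  simp only [hypercube, flipBelow_ne_flipBelow_iff]

theorem hypercube_adj_flipBelow_succ {m : ℕ} (x : Fin n → Bool) (hm : m < n) :
    (hypercube n).Adj (flipBelow x (m + 1)) (flipBelow x m) := by
  refine ⟨⟨m, hm⟩, by simp [flipBelow], fun j hj => Fin.ext ?_⟩
  simp only [flipBelow] at hj
  split_ifs at hj <;> simp_all <;> omega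

theorem exists_isPath_flipBelow (x : Fin n → Bool) {m : ℕ} (hm : m ≤ n) :
    ∃ q : (hypercube n).Walk (flipBelow x m) x,
      q.IsPath ∧ q.length = m ∧ ∀ z ∈ q.support, ∀ j : Fin n, m ≤ j → z j = x j := by
  induction m with
  | zero => exact ⟨Walk.nil.copy (flipBelow_zero x).symm rfl, by simp, by simp, by simp⟩
  | succ m ih =>
    obtain ⟨q, hq, hlen, hsupp⟩ := ih (by omega)
    have hnew : flipBelow x (m + 1) ∉ q.support := fun hmem => by
      simpa [flipBelow] using hsupp _ hmem ⟨m, hm⟩ le_rfl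
    refine ⟨.cons (hypercube_adj_flipBelow_succ x hm) q, hq.cons hnew, by simp [hlen], ?_⟩
    simp only [Walk.support_cons, List.mem_cons, forall_eq_or_imp]
    exact ⟨fun j hj => flipBelow_apply_of_le x hj, fun z hz j hj => hsupp z hz j (by omega)⟩

theorem enhanced_adj_flipBelow (x : Fin n → Bool) (hk : 0 < k) (hkn : k ≤ n) :
    (enhanced n k).Adj x (flipBelow x k) := by
  refine Or.inr ⟨fun h => ?_, fun j => ⟨fun hj => by simp [flipBelow, hj], fun hj => ?_⟩⟩
  · simpa [flipBelow, hk] using congrFun h ⟨0, by omega⟩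
  · exact (flipBelow_apply_of_le x hj).symm

theorem enhanced_exists_isCycle_length_eq (hk : 0 < k) {i : Fin n} (hi : k ≤ i)
    {u v : Fin n → Bool} (huv : ∀ j, u j ≠ v j ↔ j = i) :
    ∃ c : (enhanced n k).Walk u u, c.IsCycle ∧ c.length = k + 3 ∧ s(u, v) ∈ c.edges := by
  have huv' := hypercube_adj_of_forall_ne_iff huv
  have hvw := enhanced_adj_flipBelow v hk (hi.trans i.isLt.le)
  have hwy : (hypercube n).Adj (flipBelow v k) (flipBelow u k) :=
    hypercube_adj_flipBelow_iff.mpr huv'.symm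
  obtain ⟨q, hq, hlen, hsupp⟩ := exists_isPath_flipBelow u (hi.trans i.isLt.le)
  have hle : hypercube n ≤ enhanced n k := hypercube_le_enhanced
  refine ⟨.cons (hle huv') (.cons hvw (.cons (hle hwy) (q.mapLe hle))), ?_, by simp [hlen],
    by simp⟩
  have hvi : v i ≠ u i := ((huv i).2 rfl).symm
  have hsupp' : ∀ z ∈ (q.mapLe hle).support, z i = u i := fun z hz =>
    hsupp z (by simpa using hz) i hi
  rw [Walk.isCycle_iff_isPath_tail_and_le_length]
  simp only [Walk.tail_cons]
  refine ⟨(((Walk.isPath_mapLe hle).mpr hq).cons fun h => hvi ?_).cons ?_, by simp⟩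
  · simpa [flipBelow_apply_of_le v hi] using hsupp' _ h
  · simpa [hvw.ne] using fun h => hvi (hsupp' v h)

end Enhanced

/-- If `k` is even and `i` is a dimension with `k + 1 ≤ i ≤ n`, then the shortest
odd cycle in `Q_{n,k}` containing a given `i`-dimensional hypercube edge has
length exactly `k + 3`. (Here the dimension `i` of the paper corresponds to the
index `i` with `k ≤ i.val`.) -/
theorem stmt17 (n k : ℕ) (hk : Even k) (h1 : 2 ≤ k) (i : Fin n) (hi : k ≤ i.val) :
    ∀ u v : Fin n → Bool, (∀ j, u j ≠ v j ↔ j = i) →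
      (∃ (x : Fin n → Bool) (c : (enhanced n k).Walk x x),
        c.IsCycle ∧ c.length = k + 3 ∧ s(u, v) ∈ c.edges) ∧
      (∀ (x : Fin n → Bool) (c : (enhanced n k).Walk x x), c.IsCycle →
        Odd c.length → s(u, v) ∈ c.edges → k + 3 ≤ c.length) := by
  intro u v huv
  exact ⟨⟨u, enhanced_exists_isCycle_length_eq (by omega) hi huv⟩,
    fun _ c _ hodd hmem => enhanced_add_three_le_length_of_odd hk hi huv c hodd hmem⟩
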